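/- Let u and v be vertices of a colored tree (T, φ) with [B_{n+1}(u)] = [B_{n+1}(v)] but [B_{n+2}(u)] ≠ [B_{n+2}(v)]. Then there exist neighbors u' of u and v' of v such that [B_n(u')] = [B_n(v')] and [B_{n+1}(u')] ≠ [B_{n+1}(v')]. Consequently, for a quasi-Sturmian coloring, the special (n+1)-ball S_{n+1} is strongly adjacent to the special n-ball S_n for every n ≥ N₀. -/

import Mathlib

open SimpleGraph

variable {V A : Type*}

/-- Equivalence of colored `n`-balls: a color-preserving isometry between the balls
of radius `n` centered at `u` and `v`, sending `u` to `v`. -/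
def BallEquiv (G : SimpleGraph V) (φ : V → A) (n : ℕ) (u v : V) : Prop :=
  ∃ f : V → V, f u = v ∧
    (∀ x y : V, G.dist u x ≤ n → G.dist u y ≤ n → G.dist (f x) (f y) = G.dist x y) ∧
    (∀ x : V, G.dist u x ≤ n → φ (f x) = φ x) ∧
    (∀ z : V, G.dist v z ≤ n → ∃ x : V, G.dist u x ≤ n ∧ f x = z)

/-- The factor complexity `b(n)`: the number of classes of colored `n`-balls. -/
noncomputable def complexity (G : SimpleGraph V) (φ : V → A) (n : ℕ) : ℕ :=
  Nat.card (Quot (BallEquiv G φ n))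

/-- The colored `n`-ball at `u` is special: it admits two inequivalent `(n+1)`-extensions. -/
def IsSpecialCenter (G : SimpleGraph V) (φ : V → A) (n : ℕ) (u : V) : Prop :=
  ∃ v, BallEquiv G φ n u v ∧ ¬ BallEquiv G φ (n+1) u v

/-- The type set `Λ_u` of a vertex. -/
def typeSet (G : SimpleGraph V) (φ : V → A) (u : V) : Set ℕ :=
  {n | IsSpecialCenter G φ n u}

/-- Two vertices are in the same class: their colored `n`-balls agree for all `n`. -/
def SameClass (G : SimpleGraph V) (φ : V → A) (u v : V) : Prop :=
  ∀ n, BallEquiv G φ n u v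

/-- `m` is the maximal type of `u`. -/
def MaxType (G : SimpleGraph V) (φ : V → A) (u : V) (m : ℕ) : Prop :=
  m ∈ typeSet G φ u ∧ ∀ k ∈ typeSet G φ u, k ≤ m

/-- Weak adjacency of classes of colored `n`-balls (given by representatives `x`, `y`). -/
def WeakAdj (G : SimpleGraph V) (φ : V → A) (n : ℕ) (x y : V) : Prop :=
  ∃ v w, G.Adj v w ∧ BallEquiv G φ n x v ∧ BallEquiv G φ n y w

/-- Strong adjacency: every ball of the class of `x` has a neighboring ball of the class of `y`. -/
def StrongAdj (G : SimpleGraph V) (φ : V → A) (n : ℕ) (x y : V) : Prop :=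
  ∀ v, BallEquiv G φ n x v → ∃ w, G.Adj v w ∧ BallEquiv G φ n y w

/-- The factor graph `𝒢ₙ` on classes of colored `n`-balls. -/
def FactorGraph (G : SimpleGraph V) (φ : V → A) (n : ℕ) :
    SimpleGraph (Quot (BallEquiv G φ n)) where
  Adj a b := a ≠ b ∧ ∃ u v, G.Adj u v ∧ Quot.mk _ u = a ∧ Quot.mk _ v = b
  symm := ⟨by rintro a b ⟨hne, u, v, h, hu, hv⟩; exact ⟨hne.symm, v, u, h.symm, hv, hu⟩⟩
  loopless := ⟨by rintro a ⟨hne, _⟩; exact hne rfl⟩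

/-- The quotient graph `X = Γ\T` on classes of vertices. -/
def QuotGraph (G : SimpleGraph V) (φ : V → A) :
    SimpleGraph (Quot (SameClass G φ)) where
  Adj a b := a ≠ b ∧ ∃ u v, G.Adj u v ∧ Quot.mk _ u = a ∧ Quot.mk _ v = b
  symm := ⟨by rintro a b ⟨hne, u, v, h, hu, hv⟩; exact ⟨hne.symm, v, u, h.symm, hv, hu⟩⟩
  loopless := ⟨by rintro a ⟨hne, _⟩; exact hne rfl⟩

/-!
A ball equivalence is a color-preserving isometry between closed balls. In a tree, the closed
ball of radius `m + 1` at `c` is `c` together with the depth-`m` sectors beyond the edges at `c`,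
and isometries between such sectors that match the neighbors of `c` bijectively glue to an
isometry of balls.

Let `f` identify the `(n+1)`-balls at `u` and `v`, and suppose that neighbors with equivalent
`n`-balls always have equivalent `(n+1)`-balls. For a neighbor `a` of `u`, `f` identifies the
`n`-balls at `a` and `f a`, so some `g` identifies their `(n+1)`-balls, though `g` may send `u` to
a neighbor `w ≠ v` of `f a`. Since `f` and `g` carry the depth-`n` sector beyond the edge `a u`
onto the sectors beyond `f a v` and `f a w` respectively, exchanging those two branches turns `g`
into an isometry sending `u` to `v`. It restricts to an isometry of the depth-`(n+1)` sectors
beyond `u a` and `v (f a)`, and gluing these over all `a` identifies the `(n+2)`-balls at `u`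
and `v`.
-/

namespace SimpleGraph

variable {G : SimpleGraph V}

lemma Connected.exists_adj_dist_eq_add_one (hG : G.Connected) {c x : V} (hx : x ≠ c) :
    ∃ a, G.Adj c a ∧ G.dist c x = G.dist a x + 1 := by
  obtain ⟨p, hp⟩ := hG.exists_walk_length_eq_dist c x
  cases p with
  | nil => exact absurd rfl hx
  | @cons _ a _ hadj q =>
    have hq := dist_le q
    have htri : G.dist c x ≤ G.dist c a + G.dist a x := hG.dist_triangle
    rw [dist_eq_one_iff_adj.mpr hadj] at htri
    rw [Walk.length_cons] at hp
    exact ⟨a, hadj, by omega⟩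

lemma IsTree.eq_of_dist_eq_add_one (hG : G.IsTree) {c a a' x : V} (ha : G.Adj c a)
    (ha' : G.Adj c a') (h : G.dist c x = G.dist a x + 1) (h' : G.dist c x = G.dist a' x + 1) :
    a = a' := by
  obtain ⟨p, hp⟩ := hG.connected.exists_walk_length_eq_dist a x
  obtain ⟨p', hp'⟩ := hG.connected.exists_walk_length_eq_dist a' x
  have hpath := (hG.isAcyclic.subsingleton_path c x).elim
    ⟨_, (p.cons ha).isPath_of_length_eq_dist (by simp [hp, h])⟩
    ⟨_, (p'.cons ha').isPath_of_length_eq_dist (by simp [hp', h'])⟩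
  simpa using congrArg (fun q : G.Path c x => q.1.snd) hpath

lemma IsTree.dist_eq_add_one_of_ne (hG : G.IsTree) {c a a' x : V} (ha : G.Adj c a)
    (ha' : G.Adj c a') (hne : a ≠ a') (hx : G.dist c x = G.dist a x + 1) :
    G.dist a' x = G.dist c x + 1 := by
  have hxc : G.dist x c = G.dist c x := dist_comm
  have hxa' : G.dist x a' = G.dist a' x := dist_comm
  rcases hG.dist_eq_dist_add_one_of_adj x ha' with h | h
  · exact absurd (hG.eq_of_dist_eq_add_one ha ha' hx (by omega)) hne
  · omega

lemma IsTree.dist_eq_add_of_ne (hG : G.IsTree) {c a a' x y : V} (ha : G.Adj c a)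
    (ha' : G.Adj c a') (hne : a ≠ a') (hx : G.dist c x = G.dist a x + 1)
    (hy : G.dist c y = G.dist a' y + 1) : G.dist x y = G.dist c x + G.dist c y := by
  induction hk : G.dist a' y generalizing c a a' x with
  | zero =>
    obtain rfl : a' = y := hG.connected.dist_eq_zero_iff.mp hk
    have hxa' : G.dist x a' = G.dist a' x := dist_comm
    rw [hxa', hG.dist_eq_add_one_of_ne ha ha' hne hx, dist_eq_one_iff_adj.mpr ha']
  | succ k ih =>
    -- recentre at `a'`: then `x` lies beyond the edge `a' c` and `y` beyond an edge `a' b`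
    have hya' : y ≠ a' := by rintro rfl; simp at hk
    obtain ⟨b, hb, hby⟩ := hG.connected.exists_adj_dist_eq_add_one hya'
    have hcb : c ≠ b := by rintro rfl; omega
    have hxc := hG.dist_eq_add_one_of_ne ha ha' hne hx
    have := ih ha'.symm hb hcb hxc hby (by omega)
    omega

def sector (G : SimpleGraph V) (c a : V) (m : ℕ) : Set V :=
  {x | G.dist a x ≤ m ∧ G.dist c x = G.dist a x + 1}

def closedBall (G : SimpleGraph V) (u : V) (n : ℕ) : Set V :=
  {x | G.dist u x ≤ n}

@[simp]
lemma mem_sector {c a x : V} {m : ℕ} :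
    x ∈ G.sector c a m ↔ G.dist a x ≤ m ∧ G.dist c x = G.dist a x + 1 :=
  Iff.rfl

@[simp]
lemma mem_closedBall {u x : V} {n : ℕ} : x ∈ G.closedBall u n ↔ G.dist u x ≤ n :=
  Iff.rfl

lemma mem_sector_self {c a : V} (h : G.Adj c a) (m : ℕ) : a ∈ G.sector c a m := by
  simp [dist_eq_one_iff_adj.mpr h]

lemma mem_closedBall_self (u : V) (n : ℕ) : u ∈ G.closedBall u n := by
  simp

lemma Connected.mem_closedBall_succ_iff (hG : G.Connected) {c x : V} {m : ℕ} :
    x ∈ G.closedBall c (m + 1) ↔ x = c ∨ ∃ a ∈ G.neighborSet c, x ∈ G.sector c a m := by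
  refine ⟨fun hx => ?_, ?_⟩
  · by_cases hxc : x = c
    · exact .inl hxc
    obtain ⟨a, ha, hax⟩ := hG.exists_adj_dist_eq_add_one hxc
    exact .inr ⟨a, ha, by rw [mem_closedBall] at hx; omega, hax⟩
  · rintro (rfl | ⟨a, -, hxa, hcx⟩)
    · exact mem_closedBall_self _ _
    · rw [mem_closedBall]; omega

end SimpleGraph

structure IsColorIsomOn (G : SimpleGraph V) (φ : V → A) (f : V → V) (S T : Set V) : Prop where
  dist_eq : ∀ x ∈ S, ∀ y ∈ S, G.dist (f x) (f y) = G.dist x y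
  color_eq : ∀ x ∈ S, φ (f x) = φ x
  mapsTo : Set.MapsTo f S T
  surjOn : Set.SurjOn f S T

namespace IsColorIsomOn

variable {G : SimpleGraph V} {φ : V → A} {f g : V → V} {S T U : Set V}

lemma comp (hg : IsColorIsomOn G φ g T U) (hf : IsColorIsomOn G φ f S T) :
    IsColorIsomOn G φ (g ∘ f) S U where
  dist_eq x hx y hy := (hg.dist_eq _ (hf.mapsTo hx) _ (hf.mapsTo hy)).trans (hf.dist_eq x hx y hy)
  color_eq x hx := (hg.color_eq _ (hf.mapsTo hx)).trans (hf.color_eq x hx)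
  mapsTo := hg.mapsTo.comp hf.mapsTo
  surjOn := hg.surjOn.comp hf.surjOn

lemma injOn (hG : G.Connected) (hf : IsColorIsomOn G φ f S T) : S.InjOn f := fun x hx y hy hxy =>
  hG.dist_eq_zero_iff.mp (by rw [← hf.dist_eq x hx y hy, hxy, dist_self])

lemma bijOn (hG : G.Connected) (hf : IsColorIsomOn G φ f S T) : S.BijOn f T :=
  ⟨hf.mapsTo, hf.injOn hG, hf.surjOn⟩

lemma exists_leftInvOn (hG : G.Connected) (hf : IsColorIsomOn G φ f S T) :
    ∃ g, IsColorIsomOn G φ g T S ∧ S.LeftInvOn g f := by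
  have := hG.nonempty
  have hinv := hf.surjOn.rightInvOn_invFunOn
  have hmaps := hf.surjOn.mapsTo_invFunOn
  have hleft := (hf.injOn hG).leftInvOn_invFunOn
  refine ⟨Function.invFunOn f S, ⟨fun z hz z' hz' => ?_, fun z hz => ?_, hmaps, ?_⟩, hleft⟩
  · rw [← hf.dist_eq _ (hmaps hz) _ (hmaps hz'), hinv hz, hinv hz']
  · rw [← hf.color_eq _ (hmaps hz), hinv hz]
  · exact fun x hx => ⟨f x, hf.mapsTo hx, hleft hx⟩

lemma restrict (hf : IsColorIsomOn G φ f S T) {S' T' : Set V} (hS : S' ⊆ S) (hT : T' ⊆ T)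
    (hmem : ∀ x ∈ S, x ∈ S' ↔ f x ∈ T') : IsColorIsomOn G φ f S' T' where
  dist_eq x hx y hy := hf.dist_eq x (hS hx) y (hS hy)
  color_eq x hx := hf.color_eq x (hS hx)
  mapsTo x hx := (hmem x (hS hx)).mp hx
  surjOn z hz := by
    obtain ⟨x, hx, rfl⟩ := hf.surjOn (hT hz)
    exact ⟨x, (hmem x hx).mpr hz, rfl⟩

variable {u : V} {M : ℕ}

lemma restrict_closedBall (hG : G.Connected)
    (hf : IsColorIsomOn G φ f (G.closedBall u M) (G.closedBall (f u) M)) {a : V} {m : ℕ}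
    (ha : G.dist u a + m ≤ M) :
    IsColorIsomOn G φ f (G.closedBall a m) (G.closedBall (f a) m) := by
  have hsub : ∀ {w b}, G.dist w b + m ≤ M → G.closedBall b m ⊆ G.closedBall w M :=
    fun {_ b} h x hx => (hG.dist_triangle (v := b)).trans (by rw [mem_closedBall] at hx; omega)
  have hau : a ∈ G.closedBall u M := by rw [mem_closedBall]; omega
  have hfa : G.dist (f u) (f a) = G.dist u a := hf.dist_eq u (mem_closedBall_self u M) a hau
  refine hf.restrict (hsub ha) (hsub (by omega)) fun x hx => ?_
  simp only [mem_closedBall, hf.dist_eq a hau x hx]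

lemma restrict_sector (hG : G.Connected)
    (hf : IsColorIsomOn G φ f (G.closedBall u M) (G.closedBall (f u) M)) {c a : V} {m : ℕ}
    (hc : G.dist u c ≤ M) (ha : G.dist u a + m ≤ M) :
    IsColorIsomOn G φ f (G.sector c a m) (G.sector (f c) (f a) m) := by
  have hsub : ∀ {w b c'}, G.dist w b + m ≤ M → G.sector c' b m ⊆ G.closedBall w M :=
    fun {_ b _} h x hx => (hG.dist_triangle (v := b)).trans (by rw [mem_sector] at hx; omega)
  have hau : a ∈ G.closedBall u M := by rw [mem_closedBall]; omega
  have hfa : G.dist (f u) (f a) = G.dist u a := hf.dist_eq u (mem_closedBall_self u M) a hau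
  refine hf.restrict (hsub ha) (hsub (by omega)) fun x hx => ?_
  simp only [mem_sector, hf.dist_eq a hau x hx, hf.dist_eq c hc x hx]

lemma bijOn_neighborSet (hG : G.Connected)
    (hf : IsColorIsomOn G φ f (G.closedBall u M) (G.closedBall (f u) M)) (hM : 1 ≤ M) :
    (G.neighborSet u).BijOn f (G.neighborSet (f u)) := by
  have hsub : ∀ w, G.neighborSet w ⊆ G.closedBall w M := fun w x hx => by
    rwa [mem_closedBall, dist_eq_one_iff_adj.mpr hx]
  refine (hf.restrict (hsub u) (hsub (f u)) fun x hx => ?_).bijOn hG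
  simp only [mem_neighborSet, ← dist_eq_one_iff_adj, hf.dist_eq u (mem_closedBall_self u M) x hx]

lemma dist_eq_of_sector {c c' a x : V} {m : ℕ}
    (hf : IsColorIsomOn G φ f (G.sector c a m) (G.sector c' (f a) m)) (ha : G.Adj c a)
    (hx : x ∈ G.sector c a m) : G.dist c' (f x) = G.dist c x := by
  rw [(hf.mapsTo hx).2, hf.dist_eq a (mem_sector_self ha m) x hx, hx.2]

end IsColorIsomOn

section BallEquiv

variable {G : SimpleGraph V} {φ : V → A} {n : ℕ} {u v w : V}

lemma ballEquiv_iff :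
    BallEquiv G φ n u v ↔
      ∃ f, f u = v ∧ IsColorIsomOn G φ f (G.closedBall u n) (G.closedBall v n) := by
  refine ⟨fun ⟨f, hfu, hd, hc, hs⟩ =>
      ⟨f, hfu, ⟨fun x hx y hy => hd x y hx hy, hc, fun x hx => ?_, hs⟩⟩,
    fun ⟨f, hfu, hf⟩ =>
      ⟨f, hfu, fun x y hx hy => hf.dist_eq x hx y hy, hf.color_eq, hf.surjOn⟩⟩
  rw [mem_closedBall, ← hfu, hd u x (mem_closedBall_self u n) hx]
  exact hx

lemma BallEquiv.symm (hG : G.Connected) (h : BallEquiv G φ n u v) : BallEquiv G φ n v u := by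
  obtain ⟨f, rfl, hf⟩ := ballEquiv_iff.mp h
  obtain ⟨g, hg, hgf⟩ := hf.exists_leftInvOn hG
  exact ballEquiv_iff.mpr ⟨g, hgf (mem_closedBall_self u n), hg⟩

lemma BallEquiv.trans (h₁ : BallEquiv G φ n u v) (h₂ : BallEquiv G φ n v w) :
    BallEquiv G φ n u w := by
  obtain ⟨f, rfl, hf⟩ := ballEquiv_iff.mp h₁
  obtain ⟨g, rfl, hg⟩ := ballEquiv_iff.mp h₂
  exact ballEquiv_iff.mpr ⟨g ∘ f, rfl, hg.comp hf⟩

lemma IsSpecialCenter.of_ballEquiv (hG : G.Connected) (hu : IsSpecialCenter G φ n u)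
    (huv : BallEquiv G φ n u v) : IsSpecialCenter G φ n v := by
  obtain ⟨w, huw, hnot⟩ := hu
  by_cases hvu : BallEquiv G φ (n + 1) v u
  · exact ⟨w, (huv.symm hG).trans huw, fun hvw => hnot ((hvu.symm hG).trans hvw)⟩
  · exact ⟨u, huv.symm hG, hvu⟩

end BallEquiv

namespace SimpleGraph

variable {G : SimpleGraph V} {φ : V → A}

lemma IsTree.exists_eqOn_sector (hG : G.IsTree) (c c' : V) (m : ℕ) (H : V → V → V) :
    ∃ F : V → V, F c = c' ∧ ∀ a ∈ G.neighborSet c, (G.sector c a m).EqOn F (H a) := by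
  classical
  refine ⟨fun x =>
    if h : ∃ a ∈ G.neighborSet c, x ∈ G.sector c a m then H h.choose x else c',
    dif_neg (by rintro ⟨a, -, -, h⟩; simp at h), fun a ha x hx => ?_⟩
  have h : ∃ a ∈ G.neighborSet c, x ∈ G.sector c a m := ⟨a, ha, hx⟩
  simp only [dif_pos h, hG.eq_of_dist_eq_add_one h.choose_spec.1 ha h.choose_spec.2.2 hx.2]

theorem IsTree.isColorIsomOn_of_eqOn_sector (hG : G.IsTree) {c c' : V} {m : ℕ}
    {H : V → V → V} (hφ : φ c = φ c')
    (hbij : (G.neighborSet c).BijOn (fun a => H a a) (G.neighborSet c'))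
    (hH : ∀ a ∈ G.neighborSet c,
      IsColorIsomOn G φ (H a) (G.sector c a m) (G.sector c' (H a a) m))
    {F : V → V} (hFc : F c = c') (hF : ∀ a ∈ G.neighborSet c, (G.sector c a m).EqOn F (H a)) :
    IsColorIsomOn G φ F (G.closedBall c (m + 1)) (G.closedBall c' (m + 1)) := by
  have hball (x : V) :
      x ∈ G.closedBall c (m + 1) ↔ x = c ∨ ∃ a ∈ G.neighborSet c, x ∈ G.sector c a m :=
    hG.connected.mem_closedBall_succ_iff
  have hFx : ∀ a ∈ G.neighborSet c, ∀ x ∈ G.sector c a m,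
      F x ∈ G.sector c' (H a a) m ∧ G.dist c' (F x) = G.dist c x := fun a ha x hx => by
    rw [hF a ha hx]
    exact ⟨(hH a ha).mapsTo hx, (hH a ha).dist_eq_of_sector ha hx⟩
  have hdist : ∀ a ∈ G.neighborSet c, ∀ a' ∈ G.neighborSet c, ∀ x ∈ G.sector c a m,
      ∀ y ∈ G.sector c a' m, G.dist (F x) (F y) = G.dist x y := by
    intro a ha a' ha' x hx y hy
    by_cases haa' : a = a'
    · subst haa'
      rw [hF a ha hx, hF a ha hy]
      exact (hH a ha).dist_eq x hx y hy
    · have hne : H a a ≠ H a' a' := fun h => haa' (hbij.injOn ha ha' h)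
      rw [hG.dist_eq_add_of_ne ha ha' haa' hx.2 hy.2,
        hG.dist_eq_add_of_ne (hbij.mapsTo ha) (hbij.mapsTo ha') hne (hFx a ha x hx).1.2
          (hFx a' ha' y hy).1.2, (hFx a ha x hx).2, (hFx a' ha' y hy).2]
  refine ⟨fun x hx y hy => ?_, fun x hx => ?_, fun x hx => ?_, fun z hz => ?_⟩
  · rcases (hball x).mp hx with rfl | ⟨a, ha, hxa⟩ <;>
      rcases (hball y).mp hy with rfl | ⟨a', ha', hya⟩
    · simp
    · rw [hFc]; exact (hFx a' ha' y hya).2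
    · rw [hFc, dist_comm, (hFx a ha x hxa).2, dist_comm]
    · exact hdist a ha a' ha' x hxa y hya
  · rcases (hball x).mp hx with rfl | ⟨a, ha, hxa⟩
    · rw [hFc]; exact hφ.symm
    · rw [hF a ha hxa]; exact (hH a ha).color_eq x hxa
  · rcases (hball x).mp hx with rfl | ⟨a, ha, hxa⟩
    · rw [hFc]; exact mem_closedBall_self _ _
    · rw [mem_closedBall, (hFx a ha x hxa).2]; exact hx
  · rcases hG.connected.mem_closedBall_succ_iff.mp hz with rfl | ⟨b, hb, hzb⟩
    · exact ⟨c, mem_closedBall_self _ _, hFc⟩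
    obtain ⟨a, ha, rfl⟩ := hbij.surjOn hb
    obtain ⟨x, hx, rfl⟩ := (hH a ha).surjOn hzb
    exact ⟨x, (hball x).mpr (.inr ⟨a, ha, hx⟩), hF a ha hx⟩

variable {n : ℕ}

theorem IsTree.exists_isColorIsomOn_closedBall_apply_eq (hG : G.IsTree) {a u : V}
    {f g : V → V}
    (hg : IsColorIsomOn G φ g (G.closedBall a (n + 1)) (G.closedBall (g a) (n + 1)))
    (hu : G.Adj a u) (hfu : G.Adj (g a) (f u))
    (hf : IsColorIsomOn G φ f (G.sector a u n) (G.sector (g a) (f u) n)) :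
    ∃ F, F a = g a ∧ F u = f u ∧
      IsColorIsomOn G φ F (G.closedBall a (n + 1)) (G.closedBall (g a) (n + 1)) := by
  classical
  have hconn := hG.connected
  have hgN := hg.bijOn_neighborSet hconn (by omega)
  obtain ⟨u', hu', hgu'⟩ := hgN.surjOn hfu
  obtain ⟨f', hf', hf'f⟩ := hf.exists_leftInvOn hconn
  have hf'fu : f' (f u) = u := hf'f (mem_sector_self hu n)
  have hgsec : ∀ x ∈ G.neighborSet a,
      IsColorIsomOn G φ g (G.sector a x n) (G.sector (g a) (g x) n) := fun x hx =>
    hg.restrict_sector hconn (by simp) (by rw [dist_eq_one_iff_adj.mpr hx]; omega)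
  -- swap the branches of `g` at `u` and `u'`, sending the branch at `u'` to `g u` through `u`
  let H : V → V → V := fun x => if x = u then f else if x = u' then g ∘ f' ∘ g else g
  have hdiag : (G.neighborSet a).EqOn (g ∘ Equiv.swap u u') (fun x => H x x) := by
    intro x hx
    by_cases hxu : x = u
    · subst x; simp [H, hgu']
    by_cases hxu' : x = u'
    · subst x; simp [H, hxu, hgu', hf'fu]
    · simp [H, hxu, hxu', Equiv.swap_apply_of_ne_of_ne hxu hxu']
  have hH : ∀ x ∈ G.neighborSet a,
      IsColorIsomOn G φ (H x) (G.sector a x n) (G.sector (g a) (H x x) n) := by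
    intro x hx
    by_cases hxu : x = u
    · subst x; simpa [H] using hf
    by_cases hxu' : x = u'
    · subst x
      have hcomp := (hgsec u hu).comp (hf'.comp (hgu' ▸ hgsec u' hu'))
      simpa [H, hxu, hgu', hf'fu] using hcomp
    · simpa [H, hxu, hxu'] using hgsec x hx
  obtain ⟨F, hFa, hF⟩ := hG.exists_eqOn_sector a (g a) n H
  refine ⟨F, hFa, by simp [hF u hu (mem_sector_self hu n), H], hG.isColorIsomOn_of_eqOn_sector
    (hg.color_eq a (mem_closedBall_self _ _)).symm
    ((hgN.comp (Equiv.bijOn_swap hu hu')).congr hdiag) hH hFa hF⟩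

theorem IsTree.exists_isColorIsomOn_sector_succ (hG : G.IsTree) {u a : V} {f : V → V}
    (hf : IsColorIsomOn G φ f (G.closedBall u (n + 1)) (G.closedBall (f u) (n + 1)))
    (ha : G.Adj u a) (hext : BallEquiv G φ (n + 1) a (f a)) :
    ∃ F, F a = f a ∧
      IsColorIsomOn G φ F (G.sector u a (n + 1)) (G.sector (f u) (f a) (n + 1)) := by
  have hconn := hG.connected
  have hda : G.dist u a = 1 := dist_eq_one_iff_adj.mpr ha
  have hfa : G.Adj (f a) (f u) := ((hf.bijOn_neighborSet hconn (by omega)).mapsTo ha).symm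
  obtain ⟨g, hga, hg⟩ := ballEquiv_iff.mp hext
  rw [← hga] at hg hfa
  obtain ⟨F, hFa, hFu, hF⟩ := hG.exists_isColorIsomOn_closedBall_apply_eq hg ha.symm hfa
    (hga ▸ hf.restrict_sector hconn (by omega) (by simp))
  rw [← hFa] at hF
  have hFsec := hF.restrict_sector hconn (c := u) (a := a) (m := n + 1)
    (by rw [dist_comm, hda]; omega) (by simp)
  rw [hFu, hFa, hga] at hFsec
  exact ⟨F, hFa.trans hga, hFsec⟩

theorem IsTree.ballEquiv_add_two_of_forall_adj (hG : G.IsTree) {u v : V}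
    (h : BallEquiv G φ (n + 1) u v)
    (hadj : ∀ u' v', G.Adj u u' → G.Adj v v' → BallEquiv G φ n u' v' →
      BallEquiv G φ (n + 1) u' v') :
    BallEquiv G φ (n + 2) u v := by
  have hconn := hG.connected
  obtain ⟨f, rfl, hf⟩ := ballEquiv_iff.mp h
  have hfN := hf.bijOn_neighborSet hconn (by omega)
  have hsector (a : V) (ha : a ∈ G.neighborSet u) := by
    have hfa := hf.restrict_closedBall hconn (a := a) (m := n)
      (by rw [dist_eq_one_iff_adj.mpr ha]; omega)
    exact hG.exists_isColorIsomOn_sector_succ hf ha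
      (hadj a (f a) ha (hfN.mapsTo ha) (ballEquiv_iff.mpr ⟨f, rfl, hfa⟩))
  choose! H hHa hH using hsector
  obtain ⟨F, hFu, hF⟩ := hG.exists_eqOn_sector u (f u) (n + 1) H
  refine ballEquiv_iff.mpr ⟨F, hFu, hG.isColorIsomOn_of_eqOn_sector
    (hf.color_eq u (mem_closedBall_self u _)).symm (hfN.congr fun a ha => (hHa a ha).symm)
    (fun a ha => ?_) hFu hF⟩
  rw [hHa a ha]
  exact hH a ha

theorem IsTree.exists_adj_ballEquiv_not_ballEquiv_succ (hG : G.IsTree) {u v : V}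
    (h₁ : BallEquiv G φ (n + 1) u v) (h₂ : ¬BallEquiv G φ (n + 2) u v) :
    ∃ u' v', G.Adj u u' ∧ G.Adj v v' ∧
      BallEquiv G φ n u' v' ∧ ¬BallEquiv G φ (n + 1) u' v' := by
  by_contra! hadj
  exact h₂ (hG.ballEquiv_add_two_of_forall_adj h₁ hadj)

theorem IsTree.exists_adj_isSpecialCenter (hG : G.IsTree) {x : V}
    (hx : IsSpecialCenter G φ (n + 1) x) : ∃ y, G.Adj x y ∧ IsSpecialCenter G φ n y := by
  obtain ⟨t, h₁, h₂⟩ := hx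
  obtain ⟨y, t', hy, -, hyt⟩ := hG.exists_adj_ballEquiv_not_ballEquiv_succ h₁ h₂
  exact ⟨y, hy, t', hyt⟩

end SimpleGraph

theorem special_succ_strongly_adjacent_special_general {V A : Type*} (G : SimpleGraph V)
    (φ : V → A)
    (htree : G.IsTree)
    (N₀ : ℕ) :
    (∀ (n : ℕ) (u v : V), BallEquiv G φ (n + 1) u v → ¬ BallEquiv G φ (n + 2) u v →
      ∃ u' v' : V, G.Adj u u' ∧ G.Adj v v' ∧
        BallEquiv G φ n u' v' ∧ ¬ BallEquiv G φ (n + 1) u' v') ∧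
    (∀ n : ℕ, N₀ ≤ n → ∀ s : V, IsSpecialCenter G φ (n + 1) s →
      ∀ x : V, BallEquiv G φ (n + 1) s x →
        ∃ y : V, G.Adj x y ∧ IsSpecialCenter G φ n y) :=
  ⟨fun _ _ _ => htree.exists_adj_ballEquiv_not_ballEquiv_succ,
    fun _ _ _ hs _ hx => htree.exists_adj_isSpecialCenter (hs.of_ballEquiv htree.connected hx)⟩

/-- If `[B_{n+1}(u)] = [B_{n+1}(v)]` but `[B_{n+2}(u)] ≠ [B_{n+2}(v)]`, then some
neighbors `u'` of `u` and `v'` of `v` satisfy `[B_n(u')] = [B_n(v')]` and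
`[B_{n+1}(u')] ≠ [B_{n+1}(v')]`. Consequently, for a quasi-Sturmian coloring, the special
`(n+1)`-ball `S_{n+1}` is strongly adjacent to the special `n`-ball `S_n` for `n ≥ N₀`. -/
theorem special_succ_strongly_adjacent_special {V A : Type*} (G : SimpleGraph V)
    [G.LocallyFinite] (φ : V → A) [Finite A] (d : ℕ) (hd : 2 ≤ d)
    (htree : G.IsTree) (hreg : ∀ v : V, G.degree v = d)
    (hsurj : Function.Surjective φ)
    (N₀ c : ℕ) (hQS : ∀ n, N₀ ≤ n → complexity G φ n = n + c) :
    (∀ (n : ℕ) (u v : V), BallEquiv G φ (n + 1) u v → ¬ BallEquiv G φ (n + 2) u v →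
      ∃ u' v' : V, G.Adj u u' ∧ G.Adj v v' ∧
        BallEquiv G φ n u' v' ∧ ¬ BallEquiv G φ (n + 1) u' v') ∧
    (∀ n : ℕ, N₀ ≤ n → ∀ s : V, IsSpecialCenter G φ (n + 1) s →
      ∀ x : V, BallEquiv G φ (n + 1) s x →
        ∃ y : V, G.Adj x y ∧ IsSpecialCenter G φ n y) :=
  special_succ_strongly_adjacent_special_general G φ htree N₀
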